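/- Let n ≥ 2, let U ⊆ ℂⁿ be an open set on which the coordinates λ₁,…,λₙ are pairwise distinct, and let A₁,…,Aₙ : U → M₂(ℂ) be differentiable traceless maps satisfying the Schlesinger equations: ∂A_j/∂λ_i = [A_i,A_j]/(λ_i−λ_j) for all i ≠ j and ∂A_i/∂λ_i = −Σ_{j≠i}[A_i,A_j]/(λ_i−λ_j) for all i. Define the Hamiltonians H_j = Σ_{i≠j} tr(A_jA_i)/(λ_j−λ_i) for j = 1,…,n. Then ∂H_k/∂λ_j = ∂H_j/∂λ_k on U for all j, k. (Consequently the 1-form Σ_j H_j dλ_j is closed, so locally there exists a τ-function with ∂(ln τ)/∂λ_j = H_j.) -/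

import Mathlib

/-!
For `j ≠ k` the Schlesinger equations make `∂H_k/∂λ_j` collapse to `tr(A_j A_k)/(λ_j − λ_k)²`,
which is visibly symmetric in `j` and `k`. Differentiating `H_k` along `λ_j`, every third index
`i` contributes a multiple of the single invariant `tr([A_j, A_k] A_i)` (by cyclicity of the
trace), with coefficient
`1/((λ_j − λ_i)(λ_k − λ_j)) + 1/((λ_j − λ_k)(λ_k − λ_i)) − 1/((λ_j − λ_i)(λ_k − λ_i)) = 0`;
what survives is the derivative of the denominator of the `i = j` term.
-/

attribute [local instance] Matrix.normedAddCommGroup Matrix.normedSpace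

/-- Partial derivative of `f` with respect to the `i`-th coordinate at `x`. -/
noncomputable def pderiv' {E : Type*} [NormedAddCommGroup E] [NormedSpace ℂ E]
    {n : ℕ} (i : Fin n) (f : (Fin n → ℂ) → E) (x : Fin n → ℂ) : E :=
  deriv (fun s => f (Function.update x i s)) (x i)

/-- The Schlesinger Hamiltonian `H_j(x) = Σ_{i≠j} tr(A_j A_i)/(x_j − x_i)`. -/
noncomputable def schlesingerHam {n : ℕ}
    (A : Fin n → (Fin n → ℂ) → Matrix (Fin 2) (Fin 2) ℂ)
    (j : Fin n) (x : Fin n → ℂ) : ℂ :=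
  ∑ i ∈ Finset.univ.erase j, Matrix.trace (A j x * A i x) / (x j - x i)

open Finset Function

section TraceIdentities

variable {m R : Type*} [Fintype m] [CommRing R] (X Y Z : Matrix m m R)

theorem Matrix.trace_commutator_mul_self : ((X * Y - Y * X) * X).trace = 0 := by
  rw [Matrix.sub_mul, Matrix.trace_sub, Matrix.mul_assoc, Matrix.trace_mul_comm X,
    Matrix.mul_assoc, sub_self]

theorem Matrix.trace_mul_commutator_self : (Y * (X * Y - Y * X)).trace = 0 := by
  rw [Matrix.mul_sub, Matrix.trace_sub, ← Matrix.mul_assoc, Matrix.trace_mul_comm (Y * X),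
    sub_self]

theorem Matrix.trace_mul_commutator :
    (Y * (X * Z - Z * X)).trace = -((X * Y - Y * X) * Z).trace := by
  simp only [Matrix.mul_sub, Matrix.sub_mul, Matrix.trace_sub, ← Matrix.mul_assoc]
  linear_combination -Matrix.trace_mul_cycle Y Z X

end TraceIdentities

section Calculus

variable {n : ℕ} {m : Type*} [Fintype m]

theorem hasDerivAt_pderiv' {E : Type*} [NormedAddCommGroup E] [NormedSpace ℂ E]
    {f : (Fin n → ℂ) → E} {x : Fin n → ℂ} (hf : DifferentiableAt ℂ f x) (i : Fin n) :
    HasDerivAt (fun s => f (update x i s)) (pderiv' i f x) (x i) := by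
  have hf' : DifferentiableAt ℂ f (update x i (x i)) := by rwa [update_eq_self]
  exact (hf'.comp (x i) (hasDerivAt_update x i (x i)).differentiableAt).hasDerivAt

theorem HasDerivAt.matrix_trace_mul {𝕜 : Type*} [NontriviallyNormedField 𝕜]
    {f g : 𝕜 → Matrix m m 𝕜} {f' g' : Matrix m m 𝕜} {t : 𝕜}
    (hf : HasDerivAt f f' t) (hg : HasDerivAt g g' t) :
    HasDerivAt (fun s => (f s * g s).trace) ((f' * g t + f t * g').trace) t := by
  have entry {h : 𝕜 → Matrix m m 𝕜} {h' : Matrix m m 𝕜} (hh : HasDerivAt h h' t)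
      (p q : m) :
      HasDerivAt (fun s => h s p q) (h' p q) t :=
    hasDerivAt_pi.mp (hasDerivAt_pi.mp hh p) q
  simp only [Matrix.trace, Matrix.diag, Matrix.add_apply, Matrix.mul_apply,
    ← sum_add_distrib]
  exact HasDerivAt.fun_sum fun p _ => HasDerivAt.fun_sum fun q _ =>
    (entry hf p q).mul (entry hg q p)

end Calculus

theorem pderiv'_schlesingerHam {n : ℕ}
    {A : Fin n → (Fin n → ℂ) → Matrix (Fin 2) (Fin 2) ℂ} {x : Fin n → ℂ}
    (hA : ∀ i, DifferentiableAt ℂ (A i) x) {j k : Fin n} (hkj : x k ≠ x j) :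
    pderiv' j (schlesingerHam A k) x =
      ∑ i ∈ univ.erase k,
          (pderiv' j (A k) x * A i x + A k x * pderiv' j (A i) x).trace / (x k - x i)
        + (A k x * A j x).trace / (x k - x j) ^ 2 := by
  have hjk : j ≠ k := (ne_of_apply_ne x hkj).symm
  have hj : j ∈ univ.erase k := mem_erase.mpr ⟨hjk, mem_univ j⟩
  have hprod (i : Fin n) : HasDerivAt (fun s => (A k (update x j s) * A i (update x j s)).trace)
      ((pderiv' j (A k) x * A i x + A k x * pderiv' j (A i) x).trace) (x j) := by
    simpa only [update_eq_self] using
      (hasDerivAt_pderiv' (hA k) j).matrix_trace_mul (hasDerivAt_pderiv' (hA i) j)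
  have hsingle : (A k x * A j x).trace / (x k - x j) ^ 2 = ∑ i ∈ univ.erase k,
      if i = j then (A k x * A i x).trace / (x k - x i) ^ 2 else 0 :=
    (sum_ite_eq_of_mem' _ _ (fun i => (A k x * A i x).trace / (x k - x i) ^ 2) hj).symm
  rw [hsingle, ← sum_add_distrib]
  refine HasDerivAt.deriv (HasDerivAt.fun_sum fun i hi => ?_)
  have hik : i ≠ k := (mem_erase.mp hi).1
  by_cases hij : i = j
  · subst hij
    have hden : HasDerivAt (fun s => update x i s k - update x i s i) (-1) (x i) := by
      simp only [update_self, update_of_ne hik.symm]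
      simpa using (hasDerivAt_id (x i)).const_sub (x k)
    refine ((hprod i).fun_div hden (by simpa [update_of_ne hik.symm] using sub_ne_zero.mpr hkj)
      ).congr_deriv ?_
    simp only [if_true, update_self, update_of_ne hik.symm, update_eq_self]
    field_simp [sub_ne_zero.mpr hkj]
    ring
  · have hden (s : ℂ) : update x j s k - update x j s i = x k - x i := by
      rw [update_of_ne hjk.symm, update_of_ne hij]
    simpa only [hden, if_neg hij, add_zero] using (hprod i).div_const (x k - x i)

section SchlesingerAlgebra

variable {K m : Type*} [Field K] [Fintype m]

theorem schlesinger_summand_eq_zero (X Y Z : Matrix m m K) {p q r : K}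
    (hpq : p ≠ q) (hpr : p ≠ r) (hqr : q ≠ r) :
    -((p - r)⁻¹ * (Y * (X * Z - Z * X)).trace / (q - p))
      + ((p - q)⁻¹ * ((X * Y - Y * X) * Z).trace + (p - r)⁻¹ * (Y * (X * Z - Z * X)).trace)
        / (q - r) = 0 := by
  rw [Matrix.trace_mul_commutator]
  field_simp [sub_ne_zero.mpr hpq, sub_ne_zero.mpr hpr, sub_ne_zero.mpr hqr]
  ring

/-- Here `a i` stands for `A_i` and `d i` for `∂A_i/∂λ_j`. -/
theorem sum_trace_schlesinger_eq_zero {n : ℕ} {x : Fin n → K} (hx : Injective x)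
    {a d : Fin n → Matrix m m K} {j k : Fin n} (hjk : j ≠ k)
    (hoff : ∀ i, i ≠ j → d i = (x j - x i)⁻¹ • (a j * a i - a i * a j))
    (hdiag : d j = -∑ i ∈ univ.erase j, (x j - x i)⁻¹ • (a j * a i - a i * a j)) :
    ∑ i ∈ univ.erase k, (d k * a i + a k * d i).trace / (x k - x i) = 0 := by
  set S := (univ.erase k).erase j
  have hhead : (d k * a j + a k * d j).trace / (x k - x j)
      = ∑ i ∈ S, -((x j - x i)⁻¹ * (a k * (a j * a i - a i * a j)).trace / (x k - x j)) := by
    have hk : k ∈ univ.erase j := mem_erase.mpr ⟨hjk.symm, mem_univ k⟩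
    rw [hoff k hjk.symm, hdiag, Matrix.mul_neg, Matrix.mul_sum, ← add_sum_erase _ _ hk,
      erase_right_comm]
    simp only [Matrix.smul_mul, Matrix.mul_smul, Matrix.trace_add, Matrix.trace_neg,
      Matrix.trace_sum, Matrix.trace_smul, smul_eq_mul, Matrix.trace_commutator_mul_self,
      Matrix.trace_mul_commutator_self, mul_zero, zero_add]
    rw [neg_div, sum_div, sum_neg_distrib]
  have htail : ∀ i ∈ S, (d k * a i + a k * d i).trace / (x k - x i)
      = ((x j - x k)⁻¹ * ((a j * a k - a k * a j) * a i).trace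
          + (x j - x i)⁻¹ * (a k * (a j * a i - a i * a j)).trace) / (x k - x i) := by
    intro i hi
    rw [hoff k hjk.symm, hoff i (ne_of_mem_erase hi), Matrix.smul_mul, Matrix.mul_smul,
      Matrix.trace_add, Matrix.trace_smul, Matrix.trace_smul, smul_eq_mul, smul_eq_mul]
  have hj : j ∈ univ.erase k := mem_erase.mpr ⟨hjk, mem_univ j⟩
  rw [← add_sum_erase _ _ hj, hhead, sum_congr rfl htail, ← sum_add_distrib]
  refine sum_eq_zero fun i hi => ?_
  have hij : i ≠ j := ne_of_mem_erase hi
  have hik : i ≠ k := ne_of_mem_erase (mem_of_mem_erase hi)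
  exact schlesinger_summand_eq_zero _ _ _ (hx.ne hjk) (hx.ne hij.symm) (hx.ne hik.symm)

end SchlesingerAlgebra

theorem pderiv'_schlesingerHam_eq_trace_div_sq {n : ℕ}
    {A : Fin n → (Fin n → ℂ) → Matrix (Fin 2) (Fin 2) ℂ} {x : Fin n → ℂ}
    (hA : ∀ i, DifferentiableAt ℂ (A i) x) (hx : Injective x) {j k : Fin n} (hjk : j ≠ k)
    (hoff : ∀ i, i ≠ j →
      pderiv' j (A i) x = (x j - x i)⁻¹ • (A j x * A i x - A i x * A j x))
    (hdiag : pderiv' j (A j) x =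
      -∑ i ∈ univ.erase j, (x j - x i)⁻¹ • (A j x * A i x - A i x * A j x)) :
    pderiv' j (schlesingerHam A k) x = (A j x * A k x).trace / (x j - x k) ^ 2 := by
  rw [pderiv'_schlesingerHam hA (hx.ne hjk.symm),
    sum_trace_schlesinger_eq_zero (a := fun i => A i x) (d := fun i => pderiv' j (A i) x)
      hx hjk hoff hdiag, zero_add, Matrix.trace_mul_comm, ← neg_sub, neg_sq]

theorem schlesinger_hamiltonians_closed_one_form_general
    (n : ℕ)
    (U : Set (Fin n → ℂ)) (hU : IsOpen U)
    (hdist : ∀ x ∈ U, ∀ i j : Fin n, i ≠ j → x i ≠ x j)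
    (A : Fin n → (Fin n → ℂ) → Matrix (Fin 2) (Fin 2) ℂ)
    (hA : ∀ j, DifferentiableOn ℂ (A j) U)
    (hSchOff : ∀ x ∈ U, ∀ i j : Fin n, i ≠ j →
      pderiv' i (A j) x = (x i - x j)⁻¹ • (A i x * A j x - A j x * A i x))
    (hSchDiag : ∀ x ∈ U, ∀ i : Fin n,
      pderiv' i (A i) x =
        -∑ j ∈ Finset.univ.erase i,
          (x i - x j)⁻¹ • (A i x * A j x - A j x * A i x)) :
    ∀ x ∈ U, ∀ j k : Fin n,
      pderiv' j (schlesingerHam A k) x = pderiv' k (schlesingerHam A j) x := by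
  intro x hx j k
  rcases eq_or_ne j k with rfl | hjk
  · rfl
  have hAx (i : Fin n) : DifferentiableAt ℂ (A i) x := (hA i).differentiableAt (hU.mem_nhds hx)
  have hinj : Injective x := fun i i' h => by_contra fun hne => hdist x hx i i' hne h
  rw [pderiv'_schlesingerHam_eq_trace_div_sq hAx hinj hjk
      (fun i hi => hSchOff x hx j i hi.symm) (hSchDiag x hx j),
    pderiv'_schlesingerHam_eq_trace_div_sq hAx hinj hjk.symm
      (fun i hi => hSchOff x hx k i hi.symm) (hSchDiag x hx k),
    Matrix.trace_mul_comm, ← neg_sub, neg_sq]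

theorem schlesinger_hamiltonians_closed_one_form
    (n : ℕ) (hn : 2 ≤ n)
    (U : Set (Fin n → ℂ)) (hU : IsOpen U)
    (hdist : ∀ x ∈ U, ∀ i j : Fin n, i ≠ j → x i ≠ x j)
    (A : Fin n → (Fin n → ℂ) → Matrix (Fin 2) (Fin 2) ℂ)
    (hA : ∀ j, DifferentiableOn ℂ (A j) U)
    (htr : ∀ j, ∀ x ∈ U, Matrix.trace (A j x) = 0)
    (hSchOff : ∀ x ∈ U, ∀ i j : Fin n, i ≠ j →
      pderiv' i (A j) x = (x i - x j)⁻¹ • (A i x * A j x - A j x * A i x))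
    (hSchDiag : ∀ x ∈ U, ∀ i : Fin n,
      pderiv' i (A i) x =
        -∑ j ∈ Finset.univ.erase i,
          (x i - x j)⁻¹ • (A i x * A j x - A j x * A i x)) :
    ∀ x ∈ U, ∀ j k : Fin n,
      pderiv' j (schlesingerHam A k) x = pderiv' k (schlesingerHam A j) x :=
  schlesinger_hamiltonians_closed_one_form_general n U hU hdist A hA hSchOff hSchDiag
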